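/- arXiv:1412.0884 — 4 statements merged into one kernel-verified Lean document; each statement's English description precedes it below -/
import Mathlib

section
/- For any group G, the centralizer of Inn(G) in Aut_c(G) equals the center of Aut_c(G), i.e., C_{Aut_c(G)}(Inn(G)) = Z(Aut_c(G)). -/
/-- The group of class-preserving automorphisms of `G`. -/

def Autc (G : Type*) [Group G] : Subgroup (MulAut G) where
  carrier := {φ | ∀ g : G, ∃ h : G, φ g = h⁻¹ * g * h}
  one_mem' := fun g => ⟨1, by simp⟩
  mul_mem' := by
    intro φ ψ hφ hψ g
    obtain ⟨h, hh⟩ := hψ g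
    obtain ⟨k, hk⟩ := hφ g
    refine ⟨k * φ h, ?_⟩
    rw [MulAut.mul_apply, hh, map_mul, map_mul, map_inv, hk]
    group
  inv_mem' := by
    intro φ hφ g
    obtain ⟨h, hh⟩ := hφ (φ⁻¹ g)
    have h1 : g = h⁻¹ * φ⁻¹ g * h := by simpa using hh
    refine ⟨h⁻¹, ?_⟩
    rw [inv_inv]
    revert h1
    generalize φ⁻¹ g = X
    intro h1
    rw [h1]
    group

/-- The centralizer of `Inn(G)` in `Aut_c(G)` equals the center of `Aut_c(G)`:
a class-preserving automorphism commutes with all inner automorphisms if and only if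
it commutes with all class-preserving automorphisms. -/
theorem centralizer_inn_eq_center_autc {G : Type*} [Group G]
    (φ : MulAut G) (hφ : φ ∈ Autc G) :
    (∀ g : G, MulAut.conj g * φ = φ * MulAut.conj g) ↔
      ∀ ψ ∈ Autc G, ψ * φ = φ * ψ := by
  constructor
  · intro H ψ hψ
    have key : ∀ g y : G, g * y * g⁻¹ = φ g * y * (φ g)⁻¹ := by
      intro g y
      have h1 := DFunLike.congr_fun (H g) (φ⁻¹ y)
      simpa [MulAut.conj_apply, map_mul, map_inv, mul_assoc] using h1
    have hcen : ∀ g x : G, (g⁻¹ * φ g) * x = x * (g⁻¹ * φ g) := by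
      intro g x
      have h0 := key g x
      calc (g⁻¹ * φ g) * x = g⁻¹ * (φ g * x * (φ g)⁻¹ * φ g) := by group
        _ = g⁻¹ * (g * x * g⁻¹ * φ g) := by rw [← h0]
        _ = x * (g⁻¹ * φ g) := by group
    have hfix : ∀ c : G, (∀ x : G, c * x = x * c) → ψ c = c := by
      intro c hc
      obtain ⟨h, hh⟩ := hψ c
      rw [hh, mul_assoc, hc h]
      group
    ext x
    show ψ (φ x) = φ (ψ x)
    obtain ⟨h, hh⟩ := hψ x
    have hx : φ x = x * (x⁻¹ * φ x) := by group
    have hcx : ψ (x⁻¹ * φ x) = x⁻¹ * φ x := hfix _ (hcen x)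
    have left : ψ (φ x) = ψ x * (x⁻¹ * φ x) := by
      calc ψ (φ x) = ψ (x * (x⁻¹ * φ x)) := by rw [← hx]
        _ = ψ x * ψ (x⁻¹ * φ x) := by rw [map_mul]
        _ = ψ x * (x⁻¹ * φ x) := by rw [hcx]
    rw [left, hh, map_mul, map_mul, map_inv]
    have hc := hcen x
    have hd := hcen h
    set c := x⁻¹ * φ x with hcdef
    set d := h⁻¹ * φ h with hddef
    have e1 := hd (h⁻¹ * (x * c) * h)
    have e2 := hc h
    have e3 : x * c = φ x := by rw [hcdef]; group
    have e4 : h * d = φ h := by rw [hddef]; group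
    calc h⁻¹ * x * h * c
        = h⁻¹ * x * (h * c) := by group
      _ = h⁻¹ * x * (c * h) := by rw [e2]
      _ = d⁻¹ * (d * (h⁻¹ * (x * c) * h)) := by group
      _ = d⁻¹ * ((h⁻¹ * (x * c) * h) * d) := by rw [e1]
      _ = (h * d)⁻¹ * (x * c) * (h * d) := by group
      _ = (φ h)⁻¹ * φ x * φ h := by rw [e3, e4]
  · intro H g
    exact H (MulAut.conj g) (fun x => ⟨g⁻¹, by simp [MulAut.conj_apply]⟩)
end

section
/- For any two groups H and K, Aut_c(H × K) is isomorphic to Aut_c(H) × Aut_c(K). -/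
section Aux

variable {H K : Type*} [Group H] [Group K]

lemma autc_snd_one (φ : MulAut (H × K)) (hφ : φ ∈ Autc (H × K)) (h : H) :
    (φ (h, 1)).2 = 1 := by
  obtain ⟨c, hc⟩ := hφ (h, 1)
  rw [hc]
  simp [Prod.snd_mul]

lemma autc_fst_one (φ : MulAut (H × K)) (hφ : φ ∈ Autc (H × K)) (k : K) :
    (φ (1, k)).1 = 1 := by
  obtain ⟨c, hc⟩ := hφ (1, k)
  rw [hc]
  simp [Prod.fst_mul]

lemma autc_apply_fst (φ : MulAut (H × K)) (hφ : φ ∈ Autc (H × K)) (h : H) :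
    φ (h, 1) = ((φ (h, 1)).1, 1) :=
  Prod.ext rfl (autc_snd_one φ hφ h)

lemma autc_apply_snd (φ : MulAut (H × K)) (hφ : φ ∈ Autc (H × K)) (k : K) :
    φ (1, k) = (1, (φ (1, k)).2) :=
  Prod.ext (autc_fst_one φ hφ k) rfl

/-- The `H`-component of a class-preserving automorphism of `H × K`. -/
noncomputable def autcFst (φ : MulAut (H × K)) (hφ : φ ∈ Autc (H × K)) : H ≃* H where
  toFun h := (φ (h, 1)).1
  invFun h := (φ⁻¹ (h, 1)).1
  left_inv h := by
    have h2 : ((φ (h, 1)).1, (1 : K)) = φ (h, 1) := (autc_apply_fst φ hφ h).symm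
    show (φ⁻¹ ((φ (h, 1)).1, (1 : K))).1 = h
    rw [h2, MulAut.inv_def, MulEquiv.symm_apply_apply]
  right_inv h := by
    have h2 : ((φ⁻¹ (h, 1)).1, (1 : K)) = φ⁻¹ (h, 1) :=
      (autc_apply_fst φ⁻¹ ((Autc (H × K)).inv_mem hφ) h).symm
    show (φ ((φ⁻¹ (h, 1)).1, (1 : K))).1 = h
    rw [h2, MulAut.inv_def, MulEquiv.apply_symm_apply]
  map_mul' a b := by
    have h2 : ((a * b : H), (1 : K)) = (a, (1:K)) * (b, (1:K)) := by simp
    show (φ ((a * b : H), (1 : K))).1 = (φ (a, (1:K))).1 * (φ (b, (1:K))).1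
    rw [h2, map_mul, Prod.fst_mul]

/-- The `K`-component of a class-preserving automorphism of `H × K`. -/
noncomputable def autcSnd (φ : MulAut (H × K)) (hφ : φ ∈ Autc (H × K)) : K ≃* K where
  toFun k := (φ (1, k)).2
  invFun k := (φ⁻¹ (1, k)).2
  left_inv k := by
    have h2 : ((1 : H), (φ (1, k)).2) = φ (1, k) := (autc_apply_snd φ hφ k).symm
    show (φ⁻¹ ((1 : H), (φ (1, k)).2)).2 = k
    rw [h2, MulAut.inv_def, MulEquiv.symm_apply_apply]
  right_inv k := by
    have h2 : ((1 : H), (φ⁻¹ (1, k)).2) = φ⁻¹ (1, k) :=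
      (autc_apply_snd φ⁻¹ ((Autc (H × K)).inv_mem hφ) k).symm
    show (φ ((1 : H), (φ⁻¹ (1, k)).2)).2 = k
    rw [h2, MulAut.inv_def, MulEquiv.apply_symm_apply]
  map_mul' a b := by
    have h2 : ((1 : H), (a * b : K)) = ((1:H), a) * ((1:H), b) := by simp
    show (φ ((1 : H), (a * b : K))).2 = (φ ((1:H), a)).2 * (φ ((1:H), b)).2
    rw [h2, map_mul, Prod.snd_mul]

lemma autc_prod_mem (φ : Autc H) (ψ : Autc K) :
    MulEquiv.prodCongr (φ : MulAut H) (ψ : MulAut K) ∈ Autc (H × K) := by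
  rintro ⟨h, k⟩
  obtain ⟨a, ha⟩ := φ.2 h
  obtain ⟨b, hb⟩ := ψ.2 k
  exact ⟨(a, b), Prod.ext ha hb⟩

/-- The homomorphism `Autc H × Autc K →* Autc (H × K)`. -/
def autcProdHom : (Autc H) × (Autc K) →* Autc (H × K) where
  toFun p := ⟨MulEquiv.prodCongr (p.1 : MulAut H) (p.2 : MulAut K), autc_prod_mem p.1 p.2⟩
  map_one' := Subtype.ext (MulEquiv.ext fun _ => rfl)
  map_mul' _ _ := Subtype.ext (MulEquiv.ext fun _ => rfl)

end Aux

/-- For any two groups `H` and `K`, `Aut_c(H × K) ≅ Aut_c(H) × Aut_c(K)`. -/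
theorem autc_prod_iso (H K : Type*) [Group H] [Group K] :
    Nonempty ((Autc (H × K)) ≃* (Autc H) × (Autc K)) := by
  refine ⟨(MulEquiv.ofBijective (autcProdHom (H := H) (K := K)) ⟨?_, ?_⟩).symm⟩
  · intro p q hpq
    have h1 : ∀ g : H × K,
        MulEquiv.prodCongr (p.1 : MulAut H) (p.2 : MulAut K) g =
        MulEquiv.prodCongr (q.1 : MulAut H) (q.2 : MulAut K) g := by
      intro g
      exact congrArg (fun x => (x : Autc (H × K)).1 g) hpq
    refine Prod.ext (Subtype.ext (MulEquiv.ext fun h => ?_))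
      (Subtype.ext (MulEquiv.ext fun k => ?_))
    · exact congrArg Prod.fst (h1 (h, 1))
    · exact congrArg Prod.snd (h1 (1, k))
  · rintro ⟨φ, hφ⟩
    have hf : autcFst φ hφ ∈ Autc H := by
      intro h
      obtain ⟨c, hc⟩ := hφ (h, 1)
      refine ⟨c.1, ?_⟩
      show (φ (h, 1)).1 = _
      rw [hc]
      simp [Prod.fst_mul]
    have hg : autcSnd φ hφ ∈ Autc K := by
      intro k
      obtain ⟨c, hc⟩ := hφ (1, k)
      refine ⟨c.2, ?_⟩
      show (φ (1, k)).2 = _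
      rw [hc]
      simp [Prod.snd_mul]
    refine ⟨(⟨autcFst φ hφ, hf⟩, ⟨autcSnd φ hφ, hg⟩), ?_⟩
    apply Subtype.ext
    apply MulEquiv.ext
    rintro ⟨h, k⟩
    show ((autcFst φ hφ) h, (autcSnd φ hφ) k) = φ (h, k)
    have hdecomp : ((h, k) : H × K) = (h, 1) * (1, k) := by simp
    rw [hdecomp, map_mul, autc_apply_fst φ hφ h, autc_apply_snd φ hφ k,
      Prod.mk_mul_mk, mul_one, one_mul]
    rfl
end

section
/- Let G be a purely non-abelian finite p-group. Then the group Autcent(G) of central automorphisms of G has order equal to |Hom(G/γ_2(G), Z(G))|. -/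
/-!
For any group, `σ ↦ (g ↦ g⁻¹ σ(g))` is a bijection from the central endomorphisms onto
`Hom(G, Z(G)) = Hom(G/γ₂(G), Z(G))`, with inverse `f ↦ (g ↦ g f(g))`. It remains to see that in a
finite purely non-abelian group every central endomorphism `σ` is an automorphism. Some power
`π = σⁿ`, `n > 0`, is idempotent and still central, so `G = ker π × im π` with `ker π ≤ Z(G)`
abelian; hence `ker π = 1` and `σ` is injective.
-/
/-- A group is purely non-abelian if it has no nontrivial abelian (normal) direct factor. -/
def PurelyNonabelian (G : Type*) [Group G] : Prop :=
  ∀ H K : Subgroup G, H.Normal → K.Normal → IsMulCommutative H →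
    Disjoint H K → H ⊔ K = ⊤ → H = ⊥

open Subgroup

theorem exists_ne_zero_isIdempotentElem_pow {M : Type*} [Monoid M] [Finite M] (x : M) :
    ∃ n ≠ 0, IsIdempotentElem (x ^ n) := by
  obtain ⟨a, b, hne, hab⟩ := Finite.exists_ne_map_eq_of_infinite (x ^ · : ℕ → M)
  wlog hlt : a < b generalizing a b
  · exact this b a hne.symm hab.symm (by omega)
  obtain ⟨d, rfl⟩ := Nat.exists_eq_add_of_lt hlt
  have periodic : ∀ k m, a ≤ m → x ^ (m + k * (d + 1)) = x ^ m := by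
    intro k
    induction k with
    | zero => simp
    | succ k ih =>
      intro m hm
      have hsplit : m + (k + 1) * (d + 1) = (m - a) + (a + d + 1) + k * (d + 1) := by
        rw [add_mul, one_mul]; omega
      rw [hsplit, ih _ (by omega), pow_add, ← hab, ← pow_add, Nat.sub_add_cancel hm]
  refine ⟨(a + 1) * (d + 1), by positivity, ?_⟩
  rw [IsIdempotentElem, ← pow_add, periodic _ _ (by nlinarith)]

namespace MonoidHom

variable {G : Type*} [Group G]

theorem disjoint_ker_range_of_comp_self {π : G →* G} (hπ : π.comp π = π) :
    Disjoint π.ker π.range := by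
  rw [disjoint_def]
  rintro _ hx ⟨y, rfl⟩
  rwa [mem_ker, ← comp_apply, hπ] at hx

theorem ker_sup_range_of_comp_self {π : G →* G} (hπ : π.comp π = π) :
    π.ker ⊔ π.range = ⊤ := by
  refine eq_top_iff.mpr fun g _ => ?_
  have hker : g * (π g)⁻¹ ∈ π.ker := by
    rw [mem_ker, map_mul, map_inv, ← comp_apply, hπ, mul_inv_cancel]
  have hrange : π g ∈ π.range := ⟨g, rfl⟩
  simpa using mul_mem_sup hker hrange

end MonoidHom

section CentralEndomorphisms

variable (G : Type*) [Group G]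

def centralEndomorphisms : Submonoid (Monoid.End G) where
  carrier := {σ | ∀ g, g⁻¹ * σ g ∈ center G}
  one_mem' g := by simp
  mul_mem' {σ τ} hσ hτ g := by
    have hsplit : g⁻¹ * σ (τ g) = (g⁻¹ * τ g) * ((τ g)⁻¹ * σ (τ g)) := by group
    exact hsplit ▸ mul_mem (hτ g) (hσ (τ g))

variable {G}

namespace centralEndomorphisms

variable {σ : Monoid.End G}

theorem ker_le_center (hσ : σ ∈ centralEndomorphisms G) : σ.ker ≤ center G := fun x hx => by
  have hx' : σ x = 1 := hx
  simpa [hx'] using hσ x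

theorem range_normal (hσ : σ ∈ centralEndomorphisms G) : σ.range.Normal := by
  refine ⟨?_⟩
  rintro _ ⟨y, rfl⟩ g
  set c := g⁻¹ * σ g
  have hσg : σ g = g * c := (mul_inv_cancel_left g (σ g)).symm
  have hcomm : σ y * c = c * σ y := mem_center_iff.mp (hσ g) (σ y)
  refine ⟨g * y * g⁻¹, ?_⟩
  calc σ (g * y * g⁻¹) = g * (c * σ y) * c⁻¹ * g⁻¹ := by simp [hσg, mul_assoc]
    _ = g * σ y * g⁻¹ := by rw [← hcomm]; group

end centralEndomorphisms

theorem PurelyNonabelian.ker_eq_bot_of_isIdempotentElem (hG : PurelyNonabelian G)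
    {π : Monoid.End G} (hπ : π ∈ centralEndomorphisms G) (hidem : IsIdempotentElem π) :
    π.ker = ⊥ := by
  have hcomm : IsMulCommutative π.ker := ⟨⟨fun a b =>
    Subtype.ext (mem_center_iff.mp (centralEndomorphisms.ker_le_center hπ a.2) b).symm⟩⟩
  exact hG _ _ (MonoidHom.normal_ker π) (centralEndomorphisms.range_normal hπ) hcomm
    (MonoidHom.disjoint_ker_range_of_comp_self hidem)
    (MonoidHom.ker_sup_range_of_comp_self hidem)

theorem PurelyNonabelian.bijective_of_mem_centralEndomorphisms [Finite G]
    (hG : PurelyNonabelian G) {σ : Monoid.End G} (hσ : σ ∈ centralEndomorphisms G) :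
    Function.Bijective σ := by
  have : Finite (Monoid.End G) := Finite.of_injective _ DFunLike.coe_injective
  obtain ⟨n, hn, hidem⟩ := exists_ne_zero_isIdempotentElem_pow σ
  have hinj : Function.Injective (σ ^ n) := (MonoidHom.ker_eq_bot_iff _).mp
    (hG.ker_eq_bot_of_isIdempotentElem (pow_mem hσ n) hidem)
  obtain ⟨m, rfl⟩ := Nat.exists_eq_succ_of_ne_zero hn
  rw [pow_succ, Monoid.End.coe_mul] at hinj
  exact Finite.injective_iff_bijective.mp hinj.of_comp

namespace centralEndomorphisms

def toHom (σ : centralEndomorphisms G) : G →* center G where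
  toFun g := ⟨g⁻¹ * σ.1 g, σ.2 g⟩
  map_one' := by ext; simp
  map_mul' a b := by
    have hcomm : b⁻¹ * (a⁻¹ * σ.1 a) = (a⁻¹ * σ.1 a) * b⁻¹ := mem_center_iff.mp (σ.2 a) b⁻¹
    ext
    calc (a * b)⁻¹ * σ.1 (a * b) = b⁻¹ * (a⁻¹ * σ.1 a) * σ.1 b := by simp [mul_assoc]
      _ = a⁻¹ * σ.1 a * (b⁻¹ * σ.1 b) := by rw [hcomm]; group

def ofHom (f : G →* center G) : centralEndomorphisms G where
  val :=
    { toFun g := g * f g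
      map_one' := by simp
      map_mul' a b := by
        have hcomm : b * f a = f a * b := mem_center_iff.mp (f a).2 b
        simp only [map_mul, coe_mul]
        rw [mul_assoc a, ← mul_assoc b, hcomm]
        group }
  property g := by
    change g⁻¹ * (g * f g) ∈ center G
    exact (inv_mul_cancel_left g (f g : G)).symm ▸ (f g).2

def equivHom : centralEndomorphisms G ≃ (G →* center G) where
  toFun := toHom
  invFun := ofHom
  left_inv σ := Subtype.ext (MonoidHom.ext fun g => mul_inv_cancel_left g (σ.1 g))
  right_inv f := MonoidHom.ext fun g => Subtype.ext (inv_mul_cancel_left g (f g))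

end centralEndomorphisms

end CentralEndomorphisms

theorem card_autcent_eq_card_hom_general {G : Type*} [Group G] [Fintype G]
    (hpna : PurelyNonabelian G) :
    Nat.card {φ : MulAut G // ∀ g : G, g⁻¹ * φ g ∈ Subgroup.center G} =
      Nat.card ((G ⧸ commutator G) →* Subgroup.center G) := by
  let toEnd (φ : {φ : MulAut G // ∀ g : G, g⁻¹ * φ g ∈ Subgroup.center G}) :
      centralEndomorphisms G := ⟨φ.1.toMonoidHom, φ.2⟩
  have hbij : Function.Bijective toEnd := by
    refine ⟨fun φ ψ h => Subtype.ext (MulEquiv.toMonoidHom_injective (congrArg Subtype.val h)),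
      fun σ => ?_⟩
    exact ⟨⟨MulEquiv.ofBijective σ.1 (hpna.bijective_of_mem_centralEndomorphisms σ.2), σ.2⟩, rfl⟩
  calc _ = Nat.card (centralEndomorphisms G) := Nat.card_eq_of_bijective toEnd hbij
    _ = Nat.card (G →* center G) := Nat.card_congr centralEndomorphisms.equivHom
    _ = Nat.card (Abelianization G →* center G) :=
      open scoped IsMulCommutative in Nat.card_congr Abelianization.lift

/-- For a purely non-abelian finite `p`-group `G`, the group of central automorphisms
has order `|Hom(G/γ₂(G), Z(G))|`. -/
theorem card_autcent_eq_card_hom {G : Type*} [Group G] [Fintype G] {p : ℕ}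
    (hp : p.Prime) (hG : IsPGroup p G) (hpna : PurelyNonabelian G) :
    Nat.card {φ : MulAut G // ∀ g : G, g⁻¹ * φ g ∈ Subgroup.center G} =
      Nat.card ((G ⧸ commutator G) →* Subgroup.center G) :=
  card_autcent_eq_card_hom_general hpna
end

section
/- Let G be a finite p-group such that Z(G) ⊆ [x, G] for every x in G not in the commutator subgroup γ_2(G), where [x,G] = {[x,g] : g ∈ G}. Then |Aut_c(G)| ≥ |Autcent(G)| · |G/Z_2(G)|, where Z_2(G) is the second center of G. -/
/-!
Every central automorphism `φ` is class-preserving: it fixes `γ₂(G)` pointwise, and for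
`x ∉ γ₂(G)` the central element `x⁻¹ φ(x)` is a commutator `[x, g]` by hypothesis, so
`φ(x) = x [x, g]` is a conjugate of `x`. Inner automorphisms are class-preserving as well, and
an inner automorphism `conj a` is central exactly when `a ∈ Z₂(G)`. Hence
`(φ, a Z₂(G)) ↦ φ ∘ conj a` embeds `Autcent(G) × G/Z₂(G)` into `Aut_c(G)`.
-/

theorem Subgroup.card_mul_card_quotient_le_card {G A : Type*} [Group G] [Group A]
    {C K : Subgroup A} [Finite K] (f : G →* A) (N : Subgroup G) [N.Normal]
    (hC : C ≤ K) (hf : f.range ≤ K) (hN : C.comap f ≤ N) :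
    Nat.card C * Nat.card (G ⧸ N) ≤ Nat.card K := by
  let embed : C × (G ⧸ N) → K := fun x =>
    ⟨x.1 * f x.2.out, K.mul_mem (hC x.1.2) (hf ⟨_, rfl⟩)⟩
  have hinj : Function.Injective embed := by
    rintro ⟨c, q⟩ ⟨d, r⟩ h
    have h' : (c : A) * f q.out = d * f r.out := congrArg Subtype.val h
    have hcomap : r.out / q.out ∈ C.comap f := by
      have : (d : A)⁻¹ * c = f (r.out / q.out) := by
        rw [map_div, eq_div_iff_mul_eq', mul_assoc, h', inv_mul_cancel_left]
      rw [Subgroup.mem_comap, ← this]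
      exact C.mul_mem (C.inv_mem d.2) c.2
    have hqr : q = r := by
      rw [← QuotientGroup.out_eq' q, ← QuotientGroup.out_eq' r]
      exact (QuotientGroup.eq_iff_div_mem.mpr (hN hcomap)).symm
    subst hqr
    exact Prod.ext (Subtype.ext (mul_right_cancel h')) rfl
  rw [← Nat.card_prod]
  exact Nat.card_le_card_of_injective embed hinj

section

variable {G : Type*} [Group G]

variable (G) in
/-- `Autcent(G)`: the automorphisms acting trivially on `G ⧸ Z(G)`. -/
def centralAut : Subgroup (MulAut G) where
  carrier := {φ | ∀ g : G, g⁻¹ * φ g ∈ Subgroup.center G}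
  one_mem' g := by simp
  mul_mem' {φ ψ} hφ hψ g := by
    have : g⁻¹ * (φ * ψ) g = (g⁻¹ * ψ g) * ((ψ g)⁻¹ * φ (ψ g)) := by
      simp [MulAut.mul_apply]
    rw [this]
    exact mul_mem (hψ g) (hφ (ψ g))
  inv_mem' {φ} hφ g := by
    have := inv_mem (hφ (φ⁻¹ g))
    rwa [MulAut.apply_inv_self, mul_inv_rev, inv_inv] at this

theorem mem_centralAut {φ : MulAut G} :
    φ ∈ centralAut G ↔ ∀ g : G, g⁻¹ * φ g ∈ Subgroup.center G :=
  Iff.rfl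

def centralAut.toCenter (φ : centralAut G) : G →* Subgroup.center G where
  toFun x := ⟨x⁻¹ * φ.1 x, φ.2 x⟩
  map_one' := by ext; simp
  map_mul' x y := by
    ext
    have hcomm := Subgroup.mem_center_iff.mp (φ.2 x) y⁻¹
    calc (x * y)⁻¹ * φ.1 (x * y) = y⁻¹ * (x⁻¹ * φ.1 x) * φ.1 y := by rw [map_mul]; group
      _ = x⁻¹ * φ.1 x * y⁻¹ * φ.1 y := by rw [hcomm]
      _ = x⁻¹ * φ.1 x * (y⁻¹ * φ.1 y) := by group

open scoped IsMulCommutative in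
theorem centralAut.apply_eq_self_of_mem_commutator (φ : centralAut G) {g : G}
    (hg : g ∈ commutator G) : φ.1 g = g := by
  have h : g⁻¹ * φ.1 g = 1 :=
    congrArg Subtype.val (Abelianization.commutator_subset_ker (centralAut.toCenter φ) hg)
  exact (inv_mul_eq_one.mp h).symm

theorem centralAut_le_autc
    (hZ : ∀ x : G, x ∉ commutator G →
      (Subgroup.center G : Set G) ⊆ {c : G | ∃ g : G, c = x⁻¹ * g⁻¹ * x * g}) :
    centralAut G ≤ Autc G := by
  intro φ hφ x
  by_cases hx : x ∈ commutator G
  · exact ⟨1, by simpa using centralAut.apply_eq_self_of_mem_commutator ⟨φ, hφ⟩ hx⟩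
  · obtain ⟨g, hg⟩ := hZ x hx (hφ x)
    refine ⟨g, ?_⟩
    rw [← mul_inv_cancel_left x (φ x), hg]
    group

theorem range_conj_le_autc : (MulAut.conj : G →* MulAut G).range ≤ Autc G := by
  rintro _ ⟨a, rfl⟩ g
  exact ⟨a⁻¹, by simp [MulAut.conj_apply]⟩

theorem conj_mem_centralAut_iff {a : G} :
    MulAut.conj a ∈ centralAut G ↔ a ∈ Subgroup.upperCentralSeries G 2 := by
  rw [mem_centralAut, Subgroup.mem_upperCentralSeries_succ_iff, Subgroup.upperCentralSeries_one]
  refine (Equiv.inv G).forall_congr fun {g} => ?_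
  rw [Equiv.inv_apply, commutatorElement_def, inv_inv,
    ← Subgroup.inv_mem_iff (x := a * g⁻¹ * a⁻¹ * g), MulAut.conj_apply]
  simp only [mul_inv_rev, inv_inv, mul_assoc]

end

theorem autc_card_ge_general {G : Type*} [Group G] [Fintype G]
    (hZ : ∀ x : G, x ∉ commutator G →
      (Subgroup.center G : Set G) ⊆ {c : G | ∃ g : G, c = x⁻¹ * g⁻¹ * x * g}) :
    Nat.card {φ : MulAut G // ∀ g : G, g⁻¹ * φ g ∈ Subgroup.center G} *
        Nat.card (G ⧸ upperCentralSeries G 2) ≤ Nat.card (Autc G) :=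
  Subgroup.card_mul_card_quotient_le_card (C := centralAut G) MulAut.conj
    (Subgroup.upperCentralSeries G 2) (centralAut_le_autc hZ)
    range_conj_le_autc fun _ ha => conj_mem_centralAut_iff.mp ha

/-- If `G` is a finite `p`-group with `Z(G) ⊆ [x, G]` for all `x ∉ γ₂(G)`, then
`|Aut_c(G)| ≥ |Autcent(G)| · |G/Z₂(G)|`. -/
theorem autc_card_ge {G : Type*} [Group G] [Fintype G] {p : ℕ}
    (hp : p.Prime) (hG : IsPGroup p G)
    (hZ : ∀ x : G, x ∉ commutator G →
      (Subgroup.center G : Set G) ⊆ {c : G | ∃ g : G, c = x⁻¹ * g⁻¹ * x * g}) :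
    Nat.card {φ : MulAut G // ∀ g : G, g⁻¹ * φ g ∈ Subgroup.center G} *
        Nat.card (G ⧸ upperCentralSeries G 2) ≤ Nat.card (Autc G) :=
  autc_card_ge_general hZ
end
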